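/- (Equivalent kernel identity: ρ = 1 bias correction with the uniform kernel yields the order-(p+1) optimal equivalent kernel.) Fix an integer p ≥ 0 and set q = p+1. Let Ḡ_p ∈ ℝ^{(p+1)×(p+1)} have entries (Ḡ_p)_{ij} = ∫₀¹ u^{i+j} du = 1/(i+j+1) for 0 ≤ i,j ≤ p, let Ḡ_q ∈ ℝ^{(q+1)×(q+1)} be defined analogously, and let L̄_p ∈ ℝ^{p+1} have entries (L̄_p)_i = ∫₀¹ u^{i+p+1} du = 1/(i+p+2) for 0 ≤ i ≤ p. Then Ḡ_p and Ḡ_q are invertible, and for every x ∈ ℝ: e₀' Ḡ_p^{-1} [ r_p(x) − L̄_p · e_{p+1}' Ḡ_q^{-1} r_q(x) ] = e₀' Ḡ_q^{-1} r_q(x). That is, the bias-corrected equivalent kernel with uniform kernel and ρ = 1 coincides pointwise on [0,1] with the variance-minimizing optimal equivalent kernel of the order-(p+1) boundary local polynomial fit. -/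

import Mathlib

noncomputable section

open Matrix

namespace RD19

/-- Power vector `r_k(u) = (1, u, …, u^k)`. -/
def rvec (k : ℕ) (u : ℝ) : Fin (k + 1) → ℝ := fun j => u ^ (j : ℕ)

/-- Coordinate unit vector `e_j` of `ℝ^{k+1}`. -/
def evec (k j : ℕ) : Fin (k + 1) → ℝ := fun i => if (i : ℕ) = j then 1 else 0

/-- `Ḡ_k = ∫₀¹ r_k(u) r_k(u)' du`, i.e. `(Ḡ_k)ᵢⱼ = 1/(i+j+1)`. -/
def Gbar (k : ℕ) : Matrix (Fin (k + 1)) (Fin (k + 1)) ℝ :=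
  fun i j => 1 / ((i : ℕ) + (j : ℕ) + 1 : ℝ)

/-- `L̄_p = ∫₀¹ r_p(u) u^{p+1} du`, i.e. `(L̄_p)ᵢ = 1/(i+p+2)`. -/
def Lbar (p : ℕ) : Fin (p + 1) → ℝ := fun i => 1 / ((i : ℕ) + (p : ℕ) + 2 : ℝ)

end RD19

/-!
`Ḡ_k` is the Gram matrix of the monomials `1, u, …, u^k` in `L²[0, 1]`, so its quadratic form
at `x` is `∫₀¹ P_x²` for the polynomial `P_x` with coefficient vector `x`; this is positive for
`x ≠ 0` because `P_x` has only finitely many roots, and hence `Ḡ_k` is invertible.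

`Ḡ_{p+1}` has `Ḡ_p` as its leading block and `L̄_p` as the upper part
of its last column. Reading the first `p + 1` rows of `Ḡ_{p+1} w = r_{p+1}(x)` for
`w = Ḡ_{p+1}⁻¹ r_{p+1}(x)` gives `Ḡ_p w' + L̄_p w_{p+1} = r_p(x)`, with `w'` the first `p + 1`
entries of `w`. So the bias-corrected vector `Ḡ_p⁻¹ (r_p(x) - L̄_p w_{p+1})` is `w'`, and both
sides of the identity equal `w₀`.
-/

open MeasureTheory Polynomial

lemma Polynomial.eval_ofFn {R : Type*} [CommSemiring R] [DecidableEq R] {n : ℕ} (v : Fin n → R)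
    (u : R) :
    (ofFn n v).eval u = ∑ j, v j * u ^ (j : ℕ) := by
  simp [ofFn_eq_sum_monomial, eval_finsetSum, eval_monomial]

lemma Polynomial.integral_eval_sq_pos {P : ℝ[X]} (hP : P ≠ 0) {a b : ℝ} (hab : a < b) :
    0 < ∫ u in a..b, P.eval u ^ 2 := by
  have hcont : Continuous fun u => P.eval u ^ 2 := by fun_prop
  rw [intervalIntegral.integral_pos_iff_support_of_nonneg_ae
    (Filter.Eventually.of_forall fun u => sq_nonneg _) (hcont.intervalIntegrable a b)]
  refine ⟨hab, ?_⟩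
  have hroots : volume {u : ℝ | P.IsRoot u} = 0 := (finite_setOfPred_isRoot hP).measure_zero _
  calc (0 : ENNReal) < volume (Set.Ioc a b \ {u | P.IsRoot u}) := by
        rw [measure_sdiff_null hroots, Real.volume_Ioc]
        exact ENNReal.ofReal_pos.mpr (sub_pos.mpr hab)
    _ ≤ volume (Function.support (fun u => P.eval u ^ 2) ∩ Set.Ioc a b) :=
        measure_mono fun u hu => ⟨pow_ne_zero 2 hu.2, hu.1⟩

lemma Matrix.inv_submatrix_castSucc_mulVec_of_mulVec_eq {R : Type*} [CommRing R] {n : ℕ}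
    {M : Matrix (Fin (n + 1)) (Fin (n + 1)) R}
    (hA : IsUnit (M.submatrix Fin.castSucc Fin.castSucc).det) {w r : Fin (n + 1) → R}
    (h : M *ᵥ w = r) :
    (M.submatrix Fin.castSucc Fin.castSucc)⁻¹ *ᵥ
        (fun i => r i.castSucc - M i.castSucc (Fin.last n) * w (Fin.last n)) =
      fun i => w i.castSucc := by
  suffices hblock : M.submatrix Fin.castSucc Fin.castSucc *ᵥ (fun i => w i.castSucc) =
      fun i => r i.castSucc - M i.castSucc (Fin.last n) * w (Fin.last n) by
    rw [← hblock, mulVec_mulVec, nonsing_inv_mul _ hA, one_mulVec]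
  funext i
  rw [← h]
  simp [mulVec, dotProduct, Fin.sum_univ_castSucc]

namespace RD19

lemma dotProduct_Gbar_mulVec (k : ℕ) (x : Fin (k + 1) → ℝ) :
    x ⬝ᵥ (Gbar k *ᵥ x) = ∫ u in (0 : ℝ)..1, (ofFn (k + 1) x).eval u ^ 2 := by
  have hsq : ∀ u : ℝ, (ofFn (k + 1) x).eval u ^ 2 =
      ∑ i : Fin (k + 1), ∑ j : Fin (k + 1), x i * x j * u ^ ((i : ℕ) + j) := by
    intro u
    rw [eval_ofFn, sq, Finset.sum_mul_sum]
    exact Finset.sum_congr rfl fun i _ => Finset.sum_congr rfl fun j _ => by ring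
  simp_rw [hsq]
  rw [intervalIntegral.integral_finsetSum fun i _ =>
    (by fun_prop : Continuous _).intervalIntegrable _ _]
  refine Finset.sum_congr rfl fun i _ => ?_
  rw [intervalIntegral.integral_finsetSum fun j _ =>
    (by fun_prop : Continuous _).intervalIntegrable _ _, mulVec, dotProduct, Finset.mul_sum]
  refine Finset.sum_congr rfl fun j _ => ?_
  rw [intervalIntegral.integral_const_mul, integral_pow]
  simp only [Gbar]
  push_cast
  ring

lemma posDef_Gbar (k : ℕ) : (Gbar k).PosDef := by
  refine posDef_iff_dotProduct_mulVec.mpr ⟨?_, fun x hx => ?_⟩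
  · ext i j
    simp [Gbar, add_comm]
  · rw [star_trivial, dotProduct_Gbar_mulVec]
    exact integral_eval_sq_pos ((map_ne_zero_iff _ (injective_ofFn _)).mpr hx) zero_lt_one

lemma isUnit_det_Gbar (k : ℕ) : IsUnit (Gbar k).det :=
  (posDef_Gbar k).det_pos.ne'.isUnit

lemma evec_dotProduct {k j : ℕ} (hj : j < k + 1) (v : Fin (k + 1) → ℝ) :
    evec k j ⬝ᵥ v = v ⟨j, hj⟩ := by
  have : evec k j = Pi.single ⟨j, hj⟩ 1 := by
    ext i
    simp [evec, Pi.single_apply, Fin.ext_iff]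
  rw [this, single_one_dotProduct]

lemma Gbar_submatrix_castSucc (p : ℕ) :
    (Gbar (p + 1)).submatrix Fin.castSucc Fin.castSucc = Gbar p := by
  ext i j
  simp [Gbar]

lemma Gbar_castSucc_last (p : ℕ) (i : Fin (p + 1)) :
    Gbar (p + 1) i.castSucc (Fin.last (p + 1)) = Lbar p i := by
  simp only [Gbar, Lbar, Fin.val_castSucc, Fin.val_last]
  push_cast
  ring_nf

lemma rvec_castSucc (p : ℕ) (x : ℝ) (i : Fin (p + 1)) : rvec (p + 1) x i.castSucc = rvec p x i :=
  rfl

/-- Equivalent kernel identity: with the uniform kernel and `ρ = 1`,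
the bias-corrected order-`p` equivalent kernel coincides pointwise with the
variance-minimizing optimal equivalent kernel of the order-`(p+1)` boundary local
polynomial fit:
`e₀'Ḡ_p⁻¹[r_p(x) - L̄_p e_{p+1}'Ḡ_q⁻¹ r_q(x)] = e₀'Ḡ_q⁻¹ r_q(x)` for all `x`,
where `q = p+1`; moreover `Ḡ_p` and `Ḡ_q` are invertible. -/
theorem equivalent_kernel_identity (p : ℕ) :
    IsUnit (Gbar p).det ∧ IsUnit (Gbar (p + 1)).det ∧
    ∀ x : ℝ,
      evec p 0 ⬝ᵥ ((Gbar p)⁻¹ *ᵥ fun j : Fin (p + 1) =>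
          rvec p x j - Lbar p j *
            (evec (p + 1) (p + 1) ⬝ᵥ ((Gbar (p + 1))⁻¹ *ᵥ rvec (p + 1) x)))
        = evec (p + 1) 0 ⬝ᵥ ((Gbar (p + 1))⁻¹ *ᵥ rvec (p + 1) x) := by
  refine ⟨isUnit_det_Gbar p, isUnit_det_Gbar (p + 1), fun x => ?_⟩
  set w := (Gbar (p + 1))⁻¹ *ᵥ rvec (p + 1) x
  have hw : Gbar (p + 1) *ᵥ w = rvec (p + 1) x := by
    rw [mulVec_mulVec, mul_nonsing_inv _ (isUnit_det_Gbar _), one_mulVec]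
  have hleading := inv_submatrix_castSucc_mulVec_of_mulVec_eq
    (by rw [Gbar_submatrix_castSucc]; exact isUnit_det_Gbar p) hw
  simp only [Gbar_submatrix_castSucc, Gbar_castSucc_last, rvec_castSucc] at hleading
  rw [evec_dotProduct (p + 1).lt_add_one, evec_dotProduct p.succ_pos,
    evec_dotProduct (p + 1).succ_pos]
  exact congrFun hleading 0

end RD19
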